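/- Let g : ℝⁿ → ℝⁿ be differentiable with lower Lipschitz constant μ > 0 and g(x⋆) = 0, and define H(x) = ½|g(x)|². Let J, R : ℝⁿ → ℝⁿˣⁿ be matrix-valued functions such that J(x) is skew-symmetric and R(x) is symmetric with R(x) ⪰ εI for all x, where ε > 0. Then for every x ∈ ℝⁿ, ∇H(x)ᵀ(J(x) − R(x))∇H(x) ≤ −2εμ²·H(x). -/

import Mathlib

/-!
With `A = Dg x`, the gradient of `H` at `x` is `v = A† g(x)`. Skew-symmetry kills `⟪v, J v⟫` and
coercivity of `R` gives `⟪v, (J - R) v⟫ ≤ -ε ‖v‖²`, so it remains to show `‖v‖ ≥ μ ‖g x‖`.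
The lower Lipschitz bound passes to the derivative, `μ ‖u‖ ≤ ‖A u‖`; in finite dimensions `A` is
then onto, and writing `w = A u` gives `‖w‖² = ⟪u, A† w⟫ ≤ μ⁻¹ ‖w‖ ‖A† w‖`.
-/

open scoped RealInnerProductSpace
open Filter ContinuousLinearMap

theorem HasFDerivAt.mul_norm_le_norm_apply {E F : Type*} [NormedAddCommGroup E]
    [NormedSpace ℝ E] [NormedAddCommGroup F] [NormedSpace ℝ F] {μ : ℝ} {g : E → F}
    {A : E →L[ℝ] F} {x : E} (hA : HasFDerivAt g A x)
    (hlow : ∀ y y', μ * ‖y - y'‖ ≤ ‖g y - g y'‖) (v : E) :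
    μ * ‖v‖ ≤ ‖A v‖ := by
  have hlim := (hA.lim v (c := fun k : ℕ => (k : ℝ)) (l := atTop)
    (by simpa using tendsto_natCast_atTop_atTop)).norm
  refine ge_of_tendsto hlim ?_
  filter_upwards [eventually_gt_atTop 0] with k hk
  have hk' : (0 : ℝ) < k := Nat.cast_pos.mpr hk
  calc μ * ‖v‖ = (k : ℝ) * (μ * ‖(x + (k : ℝ)⁻¹ • v) - x‖) := by
        rw [add_sub_cancel_left, norm_smul, Real.norm_of_nonneg (inv_nonneg.mpr hk'.le)]
        field_simp
    _ ≤ (k : ℝ) * ‖g (x + (k : ℝ)⁻¹ • v) - g x‖ := by gcongr; exact hlow _ _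
    _ = ‖(k : ℝ) • (g (x + (k : ℝ)⁻¹ • v) - g x)‖ := by
        rw [norm_smul, Real.norm_of_nonneg hk'.le]

theorem ContinuousLinearMap.mul_norm_le_norm_adjoint_apply {E : Type*} [NormedAddCommGroup E]
    [InnerProductSpace ℝ E] [FiniteDimensional ℝ E] {μ : ℝ} (hμ : 0 < μ) {A : E →L[ℝ] E}
    (hA : ∀ v, μ * ‖v‖ ≤ ‖A v‖) (w : E) :
    μ * ‖w‖ ≤ ‖adjoint A w‖ := by
  have hinj : Function.Injective A := by
    refine (injective_iff_map_eq_zero A).mpr fun v hv => norm_le_zero_iff.mp ?_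
    have := hA v
    rw [hv, norm_zero] at this
    exact nonpos_of_mul_nonpos_right this hμ
  obtain ⟨v, rfl⟩ : ∃ v, A v = w := LinearMap.injective_iff_surjective.mp hinj w
  have hsq : ‖A v‖ ^ 2 ≤ ‖v‖ * ‖adjoint A (A v)‖ := by
    rw [← real_inner_self_eq_norm_sq, ← adjoint_inner_right]
    exact real_inner_le_norm _ _
  rcases (norm_nonneg (A v)).eq_or_lt with hAv | hAv
  · rw [← hAv, mul_zero]
    exact norm_nonneg _
  refine le_of_mul_le_mul_left ?_ hAv
  calc ‖A v‖ * (μ * ‖A v‖) = μ * ‖A v‖ ^ 2 := by ring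
    _ ≤ μ * (‖v‖ * ‖adjoint A (A v)‖) := by gcongr
    _ = μ * ‖v‖ * ‖adjoint A (A v)‖ := by ring
    _ ≤ ‖A v‖ * ‖adjoint A (A v)‖ := by gcongr; exact hA v

theorem HasFDerivAt.hasGradientAt_half_norm_sq {E F : Type*} [NormedAddCommGroup E]
    [InnerProductSpace ℝ E] [CompleteSpace E] [NormedAddCommGroup F] [InnerProductSpace ℝ F]
    [CompleteSpace F] {g : E → F} {A : E →L[ℝ] F} {x : E} (hA : HasFDerivAt g A x) :
    HasGradientAt (fun y => (1 / 2 : ℝ) * ‖g y‖ ^ 2) (adjoint A (g x)) x := by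
  rw [hasGradientAt_iff_hasFDerivAt]
  refine (hA.norm_sq.const_mul (1 / 2 : ℝ)).congr_fderiv ?_
  ext w
  simp [adjoint_inner_left]

theorem inner_sub_apply_le_neg_mul_norm_sq {E : Type*} [NormedAddCommGroup E]
    [InnerProductSpace ℝ E] {J R : E →ₗ[ℝ] E} {ε : ℝ} (hJ : ∀ v w, ⟪J v, w⟫ = -⟪v, J w⟫)
    (hR : ∀ v, ε * ‖v‖ ^ 2 ≤ ⟪v, R v⟫) (v : E) :
    ⟪v, (J - R) v⟫ ≤ -ε * ‖v‖ ^ 2 := by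
  have hJv : ⟪v, J v⟫ = 0 := by
    have := hJ v v
    rw [real_inner_comm] at this
    linarith
  rw [LinearMap.sub_apply, inner_sub_right, hJv]
  linarith [hR v]

theorem lyapunov_derivative_exponential_bound_general
    {n : ℕ} (μ : ℝ) (hμ : 0 < μ)
    (g : EuclideanSpace ℝ (Fin n) → EuclideanSpace ℝ (Fin n))
    (hg : Differentiable ℝ g)
    (hlow : ∀ x x' : EuclideanSpace ℝ (Fin n), μ * ‖x - x'‖ ≤ ‖g x - g x'‖)
    (H : EuclideanSpace ℝ (Fin n) → ℝ)
    (hH : H = fun x => (1 / 2 : ℝ) * ‖g x‖ ^ 2)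
    (J R : EuclideanSpace ℝ (Fin n) →
      (EuclideanSpace ℝ (Fin n) →ₗ[ℝ] EuclideanSpace ℝ (Fin n)))
    (hJskew : ∀ x v w, ⟪J x v, w⟫ = -⟪v, J x w⟫)
    (ε : ℝ) (hε : 0 < ε)
    (hRlb : ∀ x v, ε * ‖v‖ ^ 2 ≤ ⟪v, R x v⟫) :
    ∀ x : EuclideanSpace ℝ (Fin n),
      ⟪gradient H x, (J x - R x) (gradient H x)⟫ ≤ -2 * ε * μ ^ 2 * H x := by
  intro x
  subst hH
  have hDg : HasFDerivAt g (fderiv ℝ g x) x := (hg x).hasFDerivAt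
  rw [hDg.hasGradientAt_half_norm_sq.gradient]
  have hgrad_ge : μ * ‖g x‖ ≤ ‖adjoint (fderiv ℝ g x) (g x)‖ :=
    mul_norm_le_norm_adjoint_apply hμ (hDg.mul_norm_le_norm_apply hlow) (g x)
  calc _ ≤ -ε * ‖adjoint (fderiv ℝ g x) (g x)‖ ^ 2 :=
        inner_sub_apply_le_neg_mul_norm_sq (hJskew x) (hRlb x) _
    _ ≤ -ε * (μ * ‖g x‖) ^ 2 := by
        have : 0 ≤ μ * ‖g x‖ := by positivity
        rw [neg_mul, neg_mul, neg_le_neg_iff]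
        gcongr
    _ = -2 * ε * μ ^ 2 * ((1 / 2 : ℝ) * ‖g x‖ ^ 2) := by ring

/-- For `H(x) = ½|g(x)|²` with `g` differentiable, lower Lipschitz
with constant `μ > 0` and `g(x⋆) = 0`, if `J(x)` is skew-symmetric and `R(x)` is
symmetric with `R(x) ⪰ εI` (`ε > 0`), then
`∇H(x)ᵀ(J(x) − R(x))∇H(x) ≤ −2εμ²·H(x)` for every `x`. -/
theorem lyapunov_derivative_exponential_bound
    {n : ℕ} (μ : ℝ) (hμ : 0 < μ)
    (g : EuclideanSpace ℝ (Fin n) → EuclideanSpace ℝ (Fin n))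
    (hg : Differentiable ℝ g)
    (hlow : ∀ x x' : EuclideanSpace ℝ (Fin n), μ * ‖x - x'‖ ≤ ‖g x - g x'‖)
    (xs : EuclideanSpace ℝ (Fin n)) (hxs : g xs = 0)
    (H : EuclideanSpace ℝ (Fin n) → ℝ)
    (hH : H = fun x => (1 / 2 : ℝ) * ‖g x‖ ^ 2)
    (J R : EuclideanSpace ℝ (Fin n) →
      (EuclideanSpace ℝ (Fin n) →ₗ[ℝ] EuclideanSpace ℝ (Fin n)))
    (hJskew : ∀ x v w, ⟪J x v, w⟫ = -⟪v, J x w⟫)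
    (hRsymm : ∀ x v w, ⟪R x v, w⟫ = ⟪v, R x w⟫)
    (ε : ℝ) (hε : 0 < ε)
    (hRlb : ∀ x v, ε * ‖v‖ ^ 2 ≤ ⟪v, R x v⟫) :
    ∀ x : EuclideanSpace ℝ (Fin n),
      ⟪gradient H x, (J x - R x) (gradient H x)⟫ ≤ -2 * ε * μ ^ 2 * H x :=
  lyapunov_derivative_exponential_bound_general μ hμ g hg hlow H hH J R hJskew ε hε hRlb
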